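/- Suppose conditions (ii), (v) and (vii) hold. Then there exists a constant C < ∞ such that for all x, z ∈ ℝ^d and all u > 0, setting y = x + u b(x) + √u σ(x) z, one has | tr( (γ(y) − γ(x)) · σ(x)^{−T}(z zᵀ − I) σ(x)^{−1} ) | ≤ C ( u^{κ_σ} ‖z‖^{2κ_σ} + u^{κ_σ/2} ‖z‖^{κ_σ} + u^{2κ_σ} + u^{κ_σ} + u^{m} ‖z‖^{2m} + u^{m/2} ‖z‖^{m} + u^{2m} + u^{m} ) · ‖z zᵀ − I‖, where I is the d×d identity matrix. -/

import Mathlib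

open Matrix Real

/-- Frobenius norm of a `d × d` real matrix. -/
noncomputable def fnorm {d : ℕ} (A : Matrix (Fin d) (Fin d) ℝ) : ℝ :=
  Real.sqrt (∑ i, ∑ j, (A i j) ^ 2)

/-- Euclidean norm of a vector in `ℝ^d`. -/
noncomputable def vnorm {d : ℕ} (v : Fin d → ℝ) : ℝ :=
  Real.sqrt (∑ i, (v i) ^ 2)

lemma fnorm_nonneg {d : ℕ} (A : Matrix (Fin d) (Fin d) ℝ) : 0 ≤ fnorm A := Real.sqrt_nonneg _
lemma vnorm_nonneg {d : ℕ} (v : Fin d → ℝ) : 0 ≤ vnorm v := Real.sqrt_nonneg _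

lemma fnorm_transpose {d : ℕ} (A : Matrix (Fin d) (Fin d) ℝ) : fnorm Aᵀ = fnorm A := by
  unfold fnorm
  rw [Finset.sum_comm]
  rfl

lemma fnorm_sq {d : ℕ} (A : Matrix (Fin d) (Fin d) ℝ) :
    fnorm A ^ 2 = ∑ i, ∑ j, (A i j) ^ 2 := by
  unfold fnorm
  rw [Real.sq_sqrt]
  positivity

lemma abs_trace_mul_le {d : ℕ} (A B : Matrix (Fin d) (Fin d) ℝ) :
    |Matrix.trace (A * B)| ≤ fnorm A * fnorm B := by
  have h1 : Matrix.trace (A * B) = ∑ p : Fin d × Fin d, A p.1 p.2 * B p.2 p.1 := by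
    rw [Fintype.sum_prod_type]
    simp [Matrix.trace, Matrix.diag, Matrix.mul_apply]
  have h2 := Finset.sum_mul_sq_le_sq_mul_sq Finset.univ (fun p : Fin d × Fin d => A p.1 p.2)
    (fun p : Fin d × Fin d => B p.2 p.1)
  have hA : ∑ p : Fin d × Fin d, (A p.1 p.2) ^ 2 = fnorm A ^ 2 := by
    rw [fnorm_sq, ← Finset.sum_product']; rfl
  have hB : ∑ p : Fin d × Fin d, (B p.2 p.1) ^ 2 = fnorm B ^ 2 := by
    rw [fnorm_sq, Finset.sum_comm, ← Finset.sum_product']; rfl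
  rw [hA, hB] at h2
  rw [h1]
  have h3 : |∑ p : Fin d × Fin d, A p.1 p.2 * B p.2 p.1| =
      Real.sqrt ((∑ p : Fin d × Fin d, A p.1 p.2 * B p.2 p.1) ^ 2) :=
    (Real.sqrt_sq_eq_abs _).symm
  rw [h3]
  calc Real.sqrt ((∑ p : Fin d × Fin d, A p.1 p.2 * B p.2 p.1) ^ 2)
      ≤ Real.sqrt (fnorm A ^ 2 * fnorm B ^ 2) := Real.sqrt_le_sqrt h2
    _ = fnorm A * fnorm B := by
        rw [← mul_pow, Real.sqrt_sq (mul_nonneg (fnorm_nonneg _) (fnorm_nonneg _))]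

lemma fnorm_mul_le {d : ℕ} (A B : Matrix (Fin d) (Fin d) ℝ) :
    fnorm (A * B) ≤ fnorm A * fnorm B := by
  have key : ∀ i j, ((A * B) i j) ^ 2 ≤ (∑ k, (A i k) ^ 2) * (∑ k, (B k j) ^ 2) := by
    intro i j
    rw [Matrix.mul_apply]
    exact Finset.sum_mul_sq_le_sq_mul_sq Finset.univ (fun k => A i k) (fun k => B k j)
  have h : ∑ i, ∑ j, ((A * B) i j)^2 ≤ (∑ i, ∑ k, (A i k)^2) * (∑ k, ∑ j, (B k j)^2) := by
    calc ∑ i, ∑ j, ((A * B) i j)^2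
        ≤ ∑ i, ∑ j, (∑ k, (A i k) ^ 2) * (∑ k, (B k j) ^ 2) := by
          gcongr with i _ j _; exact key i j
      _ = (∑ i, ∑ k, (A i k)^2) * (∑ k, ∑ j, (B k j)^2) := by
          rw [Finset.sum_mul]
          congr 1; ext i
          rw [← Finset.mul_sum]
          congr 1
          rw [Finset.sum_comm]
  unfold fnorm
  calc Real.sqrt (∑ i, ∑ j, ((A * B) i j)^2)
      ≤ Real.sqrt ((∑ i, ∑ k, (A i k)^2) * (∑ k, ∑ j, (B k j)^2)) := Real.sqrt_le_sqrt h
    _ = _ := Real.sqrt_mul (by positivity) _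

lemma vnorm_eq {d : ℕ} (v : EuclideanSpace ℝ (Fin d)) : vnorm (v : Fin d → ℝ) = ‖v‖ := by
  rw [EuclideanSpace.norm_eq]
  simp [vnorm, Real.norm_eq_abs, sq_abs]

lemma vnorm_add_le {d : ℕ} (v w : Fin d → ℝ) : vnorm (v + w) ≤ vnorm v + vnorm w := by
  have := norm_add_le (E := EuclideanSpace ℝ (Fin d)) (WithLp.toLp 2 v) (WithLp.toLp 2 w)
  rw [← vnorm_eq, ← vnorm_eq, ← vnorm_eq] at this
  exact this

lemma vnorm_smul {d : ℕ} (a : ℝ) (v : Fin d → ℝ) : vnorm (a • v) = |a| * vnorm v := by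
  have := norm_smul (α := ℝ) (β := EuclideanSpace ℝ (Fin d)) a (WithLp.toLp 2 v)
  rw [← vnorm_eq, ← vnorm_eq, Real.norm_eq_abs] at this
  exact this

lemma rpow_add_le' {a b p : ℝ} (ha : 0 ≤ a) (hb : 0 ≤ b) (hp : 0 ≤ p) :
    (a + b) ^ p ≤ 2 ^ p * (a ^ p + b ^ p) := by
  have hmax : a + b ≤ 2 * max a b := by
    rcases max_cases a b with ⟨h, _⟩ | ⟨h, _⟩ <;> rw [h] <;>
      linarith [le_max_left a b, le_max_right a b]
  calc (a + b) ^ p ≤ (2 * max a b) ^ p :=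
        Real.rpow_le_rpow (by linarith) hmax hp
    _ = 2 ^ p * (max a b) ^ p := Real.mul_rpow (by norm_num) (le_max_of_le_left ha)
    _ ≤ 2 ^ p * (a ^ p + b ^ p) := by
        gcongr
        rcases max_cases a b with ⟨h, _⟩ | ⟨h, _⟩ <;> rw [h]
        · nlinarith [Real.rpow_nonneg hb p]
        · nlinarith [Real.rpow_nonneg ha p]

lemma sq_add_le_two_mul {a b : ℝ} : (a + b) ^ 2 ≤ 2 * (a ^ 2 + b ^ 2) := by
  nlinarith [sq_nonneg (a - b)]

lemma isUnit_det_of_posdef {d : ℕ} (A : Matrix (Fin d) (Fin d) ℝ) (c : ℝ) (hc : 0 < c)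
    (h : ∀ z : Fin d → ℝ, c * (z ⬝ᵥ z) ≤ z ⬝ᵥ ((A * Aᵀ) *ᵥ z)) : IsUnit A.det := by
  have hpd : (A * Aᵀ).PosDef := by
    refine Matrix.PosDef.of_dotProduct_mulVec_pos ?_ ?_
    · simpa [Matrix.conjTranspose_eq_transpose_of_trivial] using
        Matrix.isHermitian_mul_conjTranspose_self A
    · intro z hz
      have hzz : 0 < z ⬝ᵥ z := by
        rcases lt_or_eq_of_le
            (by simpa [dotProduct, ← sq] using
              Finset.sum_nonneg fun i _ => sq_nonneg (z i) : (0:ℝ) ≤ z ⬝ᵥ z) with h' | h'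
        · exact h'
        · exact absurd (dotProduct_self_eq_zero.mp h'.symm) hz
      have := h z
      simp only [star_trivial]
      calc (0:ℝ) < c * (z ⬝ᵥ z) := by positivity
        _ ≤ z ⬝ᵥ ((A * Aᵀ) *ᵥ z) := this
  have hdet : 0 < (A * Aᵀ).det := hpd.det_pos
  rw [Matrix.det_mul, Matrix.det_transpose] at hdet
  exact isUnit_iff_ne_zero.mpr (fun h0 => by simp [h0] at hdet)

lemma trace_reduce {d : ℕ} (A M N : Matrix (Fin d) (Fin d) ℝ) (hA : IsUnit A.det) :
    Matrix.trace ((M * Mᵀ - A * Aᵀ) * (A⁻¹ᵀ * N * A⁻¹)) =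
      Matrix.trace (((A⁻¹ * (M - A)) + (A⁻¹ * (M - A))ᵀ
        + (A⁻¹ * (M - A)) * (A⁻¹ * (M - A))ᵀ) * N) := by
  set E := A⁻¹ * (M - A) with hE
  set F := E + Eᵀ + E * Eᵀ with hF
  have h1 : A⁻¹ * A = 1 := Matrix.nonsing_inv_mul A hA
  have h2 : A * A⁻¹ = 1 := Matrix.mul_nonsing_inv A hA
  have hM : M = A * (1 + E) := by
    rw [hE, mul_add, mul_one, ← mul_assoc, h2, one_mul]
    abel
  have hdiff : M * Mᵀ - A * Aᵀ = A * F * Aᵀ := by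
    rw [hM, hF]
    rw [Matrix.transpose_mul, Matrix.transpose_add, Matrix.transpose_one]
    noncomm_ring
  rw [hdiff]
  have hT : ∀ X : Matrix (Fin d) (Fin d) ℝ, Aᵀ * (A⁻¹ᵀ * X) = X := by
    intro X
    rw [← Matrix.mul_assoc, ← Matrix.transpose_mul, h1, Matrix.transpose_one, one_mul]
  have key : A * F * Aᵀ * (A⁻¹ᵀ * N * A⁻¹) = A * (F * (N * A⁻¹)) := by
    simp only [Matrix.mul_assoc]
    rw [hT]
  rw [key, Matrix.trace_mul_comm, Matrix.mul_assoc, Matrix.mul_assoc, h1, mul_one]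

set_option maxHeartbeats 2000000 in
/-- Pointwise bound on the leading term `D₂` of the copycat CIS incremental weight under
Hölder continuity of the diffusion coefficient (proof of Proposition 6.9, case (b),
of the paper). -/
theorem cis_D2_pointwise_bound_sigma
    {d : ℕ} (hd : 1 ≤ d)
    (b : (Fin d → ℝ) → (Fin d → ℝ)) (σ : (Fin d → ℝ) → Matrix (Fin d) (Fin d) ℝ)
    (γ : (Fin d → ℝ) → Matrix (Fin d) (Fin d) ℝ)
    (hγdef : ∀ x, γ x = σ x * (σ x)ᵀ)
    -- condition (ii)
    (Cb : ℝ) (hcond_ii : ∀ x, vnorm ((σ x)⁻¹ *ᵥ b x) ≤ Cb)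
    -- condition (v)
    (c : ℝ) (hc : 0 < c) (hcond_v : ∀ x z, c * (z ⬝ᵥ z) ≤ z ⬝ᵥ (γ x *ᵥ z))
    -- condition (vii)
    (Cσ κσ m : ℝ) (hκσ0 : 0 < κσ) (hκσ1 : κσ ≤ 1) (hm : κσ < m)
    (hcond_vii : ∀ x y, fnorm ((σ x)⁻¹ * (σ y - σ x)) ≤
      Cσ * (vnorm ((σ x)⁻¹ *ᵥ (y - x)) ^ κσ + vnorm ((σ x)⁻¹ *ᵥ (y - x)) ^ m)) :
    ∃ C : ℝ, ∀ (x z : Fin d → ℝ) (u : ℝ), 0 < u →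
      |Matrix.trace
          ((γ (x + u • b x + Real.sqrt u • (σ x *ᵥ z)) - γ x) *
            (((σ x)⁻¹)ᵀ * (vecMulVec z z - 1) * (σ x)⁻¹))| ≤
        C * (u ^ κσ * vnorm z ^ (2 * κσ) + u ^ (κσ / 2) * vnorm z ^ κσ
            + u ^ (2 * κσ) + u ^ κσ
            + u ^ m * vnorm z ^ (2 * m) + u ^ (m / 2) * vnorm z ^ m
            + u ^ (2 * m) + u ^ m)
          * fnorm (vecMulVec z z - 1) := by
  have hκ0 : (0:ℝ) ≤ κσ := hκσ0.le
  have hm0 : (0:ℝ) ≤ m := by linarith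
  set Cb' := max Cb 0 with hCb'def
  have hCb'0 : (0:ℝ) ≤ Cb' := le_max_right _ _
  set Cσ' := max Cσ 0 with hCσ'def
  have hCσ'0 : (0:ℝ) ≤ Cσ' := le_max_right _ _
  set K1 := (2:ℝ)^κσ * (Cb'^κσ + 1) with hK1def
  set K2 := (2:ℝ)^m * (Cb'^m + 1) with hK2def
  set L1 := (2:ℝ)^(2*κσ) * (Cb'^(2*κσ) + 1) with hL1def
  set L2 := (2:ℝ)^(2*m) * (Cb'^(2*m) + 1) with hL2def
  have hK1 : 0 ≤ K1 := by
    rw [hK1def]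
    exact mul_nonneg (Real.rpow_nonneg (by norm_num) _)
      (add_nonneg (Real.rpow_nonneg hCb'0 _) zero_le_one)
  have hK2 : 0 ≤ K2 := by
    rw [hK2def]
    exact mul_nonneg (Real.rpow_nonneg (by norm_num) _)
      (add_nonneg (Real.rpow_nonneg hCb'0 _) zero_le_one)
  have hL1 : 0 ≤ L1 := by
    rw [hL1def]
    exact mul_nonneg (Real.rpow_nonneg (by norm_num) _)
      (add_nonneg (Real.rpow_nonneg hCb'0 _) zero_le_one)
  have hL2 : 0 ≤ L2 := by
    rw [hL2def]
    exact mul_nonneg (Real.rpow_nonneg (by norm_num) _)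
      (add_nonneg (Real.rpow_nonneg hCb'0 _) zero_le_one)
  refine ⟨2*(Cσ'*(K1+K2)) + 2*Cσ'^2*(L1+L2), ?_⟩
  intro x z u hu
  have hA : IsUnit (σ x).det := by
    apply isUnit_det_of_posdef (σ x) c hc
    intro w
    have := hcond_v x w
    rwa [hγdef] at this
  have h1 : (σ x)⁻¹ * (σ x) = 1 := Matrix.nonsing_inv_mul _ hA
  set A := σ x with hAdef
  set y := x + u • b x + Real.sqrt u • (A *ᵥ z) with hydef
  set N : Matrix (Fin d) (Fin d) ℝ := vecMulVec z z - 1 with hNdef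
  set E := A⁻¹ * (σ y - A) with hEdef
  set vz := vnorm z with hvzdef
  have hvz0 : 0 ≤ vz := vnorm_nonneg _
  -- trace identity
  have htr : Matrix.trace ((γ y - γ x) * (A⁻¹ᵀ * N * A⁻¹))
      = Matrix.trace ((E + Eᵀ + E * Eᵀ) * N) := by
    rw [hγdef, hγdef, ← hAdef]
    exact trace_reduce A (σ y) N hA
  rw [htr]
  -- step 2 : trace bound by Frobenius norms
  have hfN : 0 ≤ fnorm N := fnorm_nonneg _
  have hfE : 0 ≤ fnorm E := fnorm_nonneg _
  have hstep2 : |Matrix.trace ((E + Eᵀ + E * Eᵀ) * N)| ≤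
      2 * (fnorm E * fnorm N) + fnorm E ^ 2 * fnorm N := by
    have t1 := abs_trace_mul_le E N
    have t2 := abs_trace_mul_le Eᵀ N
    rw [fnorm_transpose] at t2
    have t3 := abs_trace_mul_le (E * Eᵀ) N
    have t4 : fnorm (E * Eᵀ) ≤ fnorm E ^ 2 := by
      calc fnorm (E * Eᵀ) ≤ fnorm E * fnorm Eᵀ := fnorm_mul_le _ _
        _ = fnorm E ^ 2 := by rw [fnorm_transpose, sq]
    have t5 : fnorm (E * Eᵀ) * fnorm N ≤ fnorm E ^ 2 * fnorm N :=
      mul_le_mul_of_nonneg_right t4 hfN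
    calc |Matrix.trace ((E + Eᵀ + E * Eᵀ) * N)|
        = |Matrix.trace (E * N) + Matrix.trace (Eᵀ * N) + Matrix.trace ((E * Eᵀ) * N)| := by
          rw [add_mul, add_mul, Matrix.trace_add, Matrix.trace_add]
      _ ≤ |Matrix.trace (E * N) + Matrix.trace (Eᵀ * N)| + |Matrix.trace ((E * Eᵀ) * N)| :=
          abs_add_le _ _
      _ ≤ |Matrix.trace (E * N)| + |Matrix.trace (Eᵀ * N)| + |Matrix.trace ((E * Eᵀ) * N)| := by
          linarith [abs_add_le (Matrix.trace (E * N)) (Matrix.trace (Eᵀ * N))]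
      _ ≤ 2 * (fnorm E * fnorm N) + fnorm E ^ 2 * fnorm N := by linarith
  -- step 3 : bound on r
  set r := vnorm (A⁻¹ *ᵥ (y - x)) with hrdef
  have hr0 : 0 ≤ r := vnorm_nonneg _
  have hyx : y - x = u • b x + Real.sqrt u • (A *ᵥ z) := by
    rw [hydef]; abel
  have hmv : A⁻¹ *ᵥ (y - x) = u • (A⁻¹ *ᵥ b x) + Real.sqrt u • z := by
    rw [hyx, Matrix.mulVec_add, Matrix.mulVec_smul, Matrix.mulVec_smul,
      Matrix.mulVec_mulVec, h1, Matrix.one_mulVec]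
  have hr : r ≤ u * Cb' + Real.sqrt u * vz := by
    rw [hrdef, hmv]
    calc vnorm (u • (A⁻¹ *ᵥ b x) + Real.sqrt u • z)
        ≤ vnorm (u • (A⁻¹ *ᵥ b x)) + vnorm (Real.sqrt u • z) := vnorm_add_le _ _
      _ = |u| * vnorm (A⁻¹ *ᵥ b x) + |Real.sqrt u| * vz := by rw [vnorm_smul, vnorm_smul, hvzdef]
      _ ≤ u * Cb' + Real.sqrt u * vz := by
          rw [abs_of_pos hu, abs_of_nonneg (Real.sqrt_nonneg u)]
          have hbb : vnorm (A⁻¹ *ᵥ b x) ≤ Cb' := (hcond_ii x).trans (le_max_left _ _)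
          exact add_le_add_left (mul_le_mul_of_nonneg_left hbb hu.le) _
  -- step 4 : Hölder bound
  have hE1 : fnorm E ≤ Cσ' * (r ^ κσ + r ^ m) := by
    have h7 := hcond_vii x y
    rw [← hAdef, ← hEdef, ← hrdef] at h7
    refine h7.trans (mul_le_mul_of_nonneg_right (le_max_left _ _) ?_)
    exact add_nonneg (Real.rpow_nonneg hr0 _) (Real.rpow_nonneg hr0 _)
  -- sqrt-power computations
  have hsq : ∀ p : ℝ, Real.sqrt u ^ p = u ^ (p / 2) := by
    intro p
    rw [Real.sqrt_eq_rpow, ← Real.rpow_mul hu.le]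
    congr 1
    ring
  -- generic r-power bound
  have hrp : ∀ p : ℝ, 0 ≤ p → r ^ p ≤ 2 ^ p * (Cb' ^ p * u ^ p + u ^ (p/2) * vz ^ p) := by
    intro p hp
    calc r ^ p ≤ (u * Cb' + Real.sqrt u * vz) ^ p :=
          Real.rpow_le_rpow hr0 hr hp
      _ ≤ 2 ^ p * ((u * Cb') ^ p + (Real.sqrt u * vz) ^ p) :=
          rpow_add_le' (by positivity) (mul_nonneg (Real.sqrt_nonneg u) hvz0) hp
      _ = 2 ^ p * (Cb' ^ p * u ^ p + u ^ (p/2) * vz ^ p) := by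
          rw [Real.mul_rpow hu.le hCb'0, Real.mul_rpow (Real.sqrt_nonneg u) hvz0, hsq]
          ring
  -- the sum S and its term bounds
  set S := u ^ κσ * vz ^ (2 * κσ) + u ^ (κσ / 2) * vz ^ κσ
      + u ^ (2 * κσ) + u ^ κσ
      + u ^ m * vz ^ (2 * m) + u ^ (m / 2) * vz ^ m
      + u ^ (2 * m) + u ^ m with hSdef
  have n1 : 0 ≤ u ^ κσ * vz ^ (2*κσ) := mul_nonneg (Real.rpow_nonneg hu.le _) (Real.rpow_nonneg hvz0 _)
  have n2 : 0 ≤ u ^ (κσ/2) * vz ^ κσ := mul_nonneg (Real.rpow_nonneg hu.le _) (Real.rpow_nonneg hvz0 _)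
  have n3 : 0 ≤ u ^ (2*κσ) := Real.rpow_nonneg hu.le _
  have n4 : 0 ≤ u ^ κσ := Real.rpow_nonneg hu.le _
  have n5 : 0 ≤ u ^ m * vz ^ (2*m) := mul_nonneg (Real.rpow_nonneg hu.le _) (Real.rpow_nonneg hvz0 _)
  have n6 : 0 ≤ u ^ (m/2) * vz ^ m := mul_nonneg (Real.rpow_nonneg hu.le _) (Real.rpow_nonneg hvz0 _)
  have n7 : 0 ≤ u ^ (2*m) := Real.rpow_nonneg hu.le _
  have n8 : 0 ≤ u ^ m := Real.rpow_nonneg hu.le _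
  have hS0 : 0 ≤ S := by rw [hSdef]; linarith
  have hS4 : u ^ κσ ≤ S := by rw [hSdef]; linarith
  have hS2 : u ^ (κσ/2) * vz ^ κσ ≤ S := by rw [hSdef]; linarith
  have hS8 : u ^ m ≤ S := by rw [hSdef]; linarith
  have hS6 : u ^ (m/2) * vz ^ m ≤ S := by rw [hSdef]; linarith
  have hS3 : u ^ (2*κσ) ≤ S := by rw [hSdef]; linarith
  have hS1 : u ^ κσ * vz ^ (2*κσ) ≤ S := by rw [hSdef]; linarith
  have hS7 : u ^ (2*m) ≤ S := by rw [hSdef]; linarith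
  have hS5 : u ^ m * vz ^ (2*m) ≤ S := by rw [hSdef]; linarith
  -- r^κσ ≤ K1 * S etc.
  have hCbκ : 0 ≤ Cb' ^ κσ := Real.rpow_nonneg hCb'0 _
  have hCbm : 0 ≤ Cb' ^ m := Real.rpow_nonneg hCb'0 _
  have hCb2κ : 0 ≤ Cb' ^ (2*κσ) := Real.rpow_nonneg hCb'0 _
  have hCb2m : 0 ≤ Cb' ^ (2*m) := Real.rpow_nonneg hCb'0 _
  have h2κ : 0 ≤ (2:ℝ) ^ κσ := Real.rpow_nonneg (by norm_num) _
  have h2m : 0 ≤ (2:ℝ) ^ m := Real.rpow_nonneg (by norm_num) _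
  have h22κ : 0 ≤ (2:ℝ) ^ (2*κσ) := Real.rpow_nonneg (by norm_num) _
  have h22m : 0 ≤ (2:ℝ) ^ (2*m) := Real.rpow_nonneg (by norm_num) _
  have hrκS : r ^ κσ ≤ K1 * S := by
    calc r ^ κσ ≤ 2 ^ κσ * (Cb' ^ κσ * u ^ κσ + u ^ (κσ/2) * vz ^ κσ) := hrp κσ hκ0
      _ ≤ 2 ^ κσ * (Cb' ^ κσ * S + S) :=
          mul_le_mul_of_nonneg_left (add_le_add (mul_le_mul_of_nonneg_left hS4 hCbκ) hS2) h2κ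
      _ = K1 * S := by rw [hK1def]; ring
  have hrmS : r ^ m ≤ K2 * S := by
    calc r ^ m ≤ 2 ^ m * (Cb' ^ m * u ^ m + u ^ (m/2) * vz ^ m) := hrp m hm0
      _ ≤ 2 ^ m * (Cb' ^ m * S + S) :=
          mul_le_mul_of_nonneg_left (add_le_add (mul_le_mul_of_nonneg_left hS8 hCbm) hS6) h2m
      _ = K2 * S := by rw [hK2def]; ring
  have hr2κS : r ^ (2*κσ) ≤ L1 * S := by
    have := hrp (2*κσ) (by linarith)
    have hhalf : (2*κσ)/2 = κσ := by ring
    rw [hhalf] at this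
    calc r ^ (2*κσ) ≤ 2 ^ (2*κσ) * (Cb' ^ (2*κσ) * u ^ (2*κσ) + u ^ κσ * vz ^ (2*κσ)) := this
      _ ≤ 2 ^ (2*κσ) * (Cb' ^ (2*κσ) * S + S) :=
          mul_le_mul_of_nonneg_left (add_le_add (mul_le_mul_of_nonneg_left hS3 hCb2κ) hS1) h22κ
      _ = L1 * S := by rw [hL1def]; ring
  have hr2mS : r ^ (2*m) ≤ L2 * S := by
    have := hrp (2*m) (by linarith)
    have hhalf : (2*m)/2 = m := by ring
    rw [hhalf] at this
    calc r ^ (2*m) ≤ 2 ^ (2*m) * (Cb' ^ (2*m) * u ^ (2*m) + u ^ m * vz ^ (2*m)) := this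
      _ ≤ 2 ^ (2*m) * (Cb' ^ (2*m) * S + S) :=
          mul_le_mul_of_nonneg_left (add_le_add (mul_le_mul_of_nonneg_left hS7 hCb2m) hS5) h22m
      _ = L2 * S := by rw [hL2def]; ring
  -- E bounds in terms of S
  have hES : fnorm E ≤ Cσ' * (K1 + K2) * S := by
    calc fnorm E ≤ Cσ' * (r ^ κσ + r ^ m) := hE1
      _ ≤ Cσ' * (K1 * S + K2 * S) :=
          mul_le_mul_of_nonneg_left (add_le_add hrκS hrmS) hCσ'0
      _ = Cσ' * (K1 + K2) * S := by ring
  have ha2 : (r ^ κσ) ^ 2 = r ^ (2*κσ) := by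
    rw [← Real.rpow_natCast (r ^ κσ) 2, ← Real.rpow_mul hr0]
    norm_num
    rw [mul_comm]
  have hb2 : (r ^ m) ^ 2 = r ^ (2*m) := by
    rw [← Real.rpow_natCast (r ^ m) 2, ← Real.rpow_mul hr0]
    norm_num
    rw [mul_comm]
  have hE2S : fnorm E ^ 2 ≤ 2 * Cσ' ^ 2 * (L1 + L2) * S := by
    have hsq1 : fnorm E ^ 2 ≤ (Cσ' * (r ^ κσ + r ^ m)) ^ 2 := by
      have := pow_le_pow_left₀ hfE hE1 2
      exact this
    have hrκ0 : 0 ≤ r ^ κσ := Real.rpow_nonneg hr0 _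
    have hrm0 : 0 ≤ r ^ m := Real.rpow_nonneg hr0 _
    calc fnorm E ^ 2 ≤ (Cσ' * (r ^ κσ + r ^ m)) ^ 2 := hsq1
      _ = Cσ' ^ 2 * (r ^ κσ + r ^ m) ^ 2 := by ring
      _ ≤ Cσ' ^ 2 * (2 * ((r ^ κσ) ^ 2 + (r ^ m) ^ 2)) :=
          mul_le_mul_of_nonneg_left sq_add_le_two_mul (sq_nonneg Cσ')
      _ = Cσ' ^ 2 * (2 * (r ^ (2*κσ) + r ^ (2*m))) := by rw [ha2, hb2]
      _ ≤ Cσ' ^ 2 * (2 * (L1 * S + L2 * S)) :=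
          mul_le_mul_of_nonneg_left
            (mul_le_mul_of_nonneg_left (add_le_add hr2κS hr2mS) (by norm_num)) (sq_nonneg Cσ')
      _ = 2 * Cσ' ^ 2 * (L1 + L2) * S := by ring
  -- conclude
  calc |Matrix.trace ((E + Eᵀ + E * Eᵀ) * N)|
      ≤ 2 * (fnorm E * fnorm N) + fnorm E ^ 2 * fnorm N := hstep2
    _ ≤ 2 * (Cσ' * (K1 + K2) * S * fnorm N) + 2 * Cσ' ^ 2 * (L1 + L2) * S * fnorm N := by
        have e1 : fnorm E * fnorm N ≤ Cσ' * (K1 + K2) * S * fnorm N :=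
          mul_le_mul_of_nonneg_right hES hfN
        have e2 : fnorm E ^ 2 * fnorm N ≤ 2 * Cσ' ^ 2 * (L1 + L2) * S * fnorm N :=
          mul_le_mul_of_nonneg_right hE2S hfN
        linarith
    _ = (2*(Cσ'*(K1+K2)) + 2*Cσ'^2*(L1+L2)) * S * fnorm N := by ring
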